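/- arXiv:2402.15453 — 7 statements merged into one kernel-verified Lean document; each statement's English description precedes it below -/
import Mathlib

section
/- Define polynomials F_n(y) in ℤ[y] by F_0(y)=0, F_1(y)=1, F_n(y)=F_{n−1}(y)+F_{n−2}(y) if n is even, and F_n(y)=F_{n−1}(y)+y·F_{n−2}(y) if n is odd. Then for all n,m ≥ 1 not both even, the coefficientwise inequality F_n(y)·F_m(y) ≤ F_{n+m−1}(y) holds, i.e., every coefficient of F_{n+m−1}(y) − F_n(y)·F_m(y) is nonnegative. -/
open Polynomial

noncomputable def Fpoly : ℕ → Polynomial ℤ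
  | 0 => 0
  | 1 => 1
  | (n+2) => Fpoly (n+1) + (if Even n then Fpoly n else X * Fpoly n)

lemma Fpoly_add_two (n : ℕ) :
    Fpoly (n+2) = Fpoly (n+1) + (if Even n then Fpoly n else X * Fpoly n) := rfl

lemma Fpoly_coeff_nonneg : ∀ n k, 0 ≤ (Fpoly n).coeff k := by
  intro n
  induction n using Nat.strong_induction_on with
  | _ n ih =>
    match n with
    | 0 => intro k; simp [Fpoly]
    | 1 => intro k; rw [show Fpoly 1 = 1 from rfl, coeff_one]; split <;> norm_num
    | (n+2) =>
      intro k
      rw [Fpoly_add_two, coeff_add]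
      have h1 := ih (n+1) (by omega) k
      have h2 := ih n (by omega)
      split
      · exact add_nonneg h1 (h2 k)
      · apply add_nonneg h1
        cases k with
        | zero => simp [mul_coeff_zero]
        | succ k => rw [coeff_X_mul]; exact h2 k

lemma X_mul_coeff_nonneg (p : Polynomial ℤ) (hp : ∀ k, 0 ≤ p.coeff k) :
    ∀ k, 0 ≤ (X * p).coeff k := by
  intro k
  cases k with
  | zero => simp [mul_coeff_zero]
  | succ k => rw [coeff_X_mul]; exact hp k

lemma key : ∀ s n m, n + m = s → 1 ≤ n → 1 ≤ m → ¬ (Even n ∧ Even m) →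
    ∀ k : ℕ, 0 ≤ (Fpoly (n + m - 1) - Fpoly n * Fpoly m).coeff k := by
  intro s
  induction s using Nat.strong_induction_on with
  | _ s ih =>
  intro n m hs hn hm hpar k
  rcases Nat.lt_or_ge n 2 with h1 | h1
  · -- n = 1
    have hn1 : n = 1 := by omega
    subst hn1
    rw [show Fpoly 1 = 1 from rfl, one_mul, show 1 + m - 1 = m from by omega,
      sub_self, coeff_zero]
  rcases Nat.lt_or_ge m 2 with h2 | h2
  · -- m = 1
    have hm1 : m = 1 := by omega
    subst hm1
    rw [show Fpoly 1 = 1 from rfl, mul_one, show n + 1 - 1 = n from by omega,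
      sub_self, coeff_zero]
  obtain ⟨a, rfl⟩ : ∃ a, n = a + 2 := ⟨n - 2, by omega⟩
  obtain ⟨b, rfl⟩ : ∃ b, m = b + 2 := ⟨m - 2, by omega⟩
  rw [show a + 2 + (b + 2) - 1 = a + b + 1 + 2 from by omega]
  have hpar2 : ¬ (a % 2 = 0 ∧ b % 2 = 0) := by
    intro ⟨x, y⟩
    exact hpar ⟨Nat.even_iff.mpr (by omega), Nat.even_iff.mpr (by omega)⟩
  by_cases hb : Even b
  · -- m even, hence n odd
    have hb' : b % 2 = 0 := Nat.even_iff.mp hb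
    have ha' : a % 2 = 1 := by omega
    have hab : Even (a + b + 1) := Nat.even_iff.mpr (by omega)
    rw [Fpoly_add_two (a + b + 1), if_pos hab, Fpoly_add_two b, if_pos hb]
    have hsplit : Fpoly (a + b + 1 + 1) + Fpoly (a + b + 1)
        - Fpoly (a + 2) * (Fpoly (b + 1) + Fpoly b)
        = (Fpoly (a + b + 1 + 1) - Fpoly (a + 2) * Fpoly (b + 1))
          + (Fpoly (a + b + 1) - Fpoly (a + 2) * Fpoly b) := by ring
    rw [hsplit, coeff_add]
    apply add_nonneg
    · have h := ih (a + 2 + (b + 1)) (by omega) (a + 2) (b + 1) rfl (by omega) (by omega)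
        (by rintro ⟨x, y⟩; rw [Nat.even_iff] at x y; omega) k
      rwa [show a + 2 + (b + 1) - 1 = a + b + 1 + 1 from by omega] at h
    · rcases Nat.eq_zero_or_pos b with hb0 | hb0
      · subst hb0
        rw [show Fpoly 0 = 0 from rfl, mul_zero, sub_zero]
        exact Fpoly_coeff_nonneg _ k
      · have h := ih (a + 2 + b) (by omega) (a + 2) b rfl (by omega) hb0
          (by rintro ⟨x, y⟩; rw [Nat.even_iff] at x y; omega) k
        rwa [show a + 2 + b - 1 = a + b + 1 from by omega] at h
  by_cases ha : Even a
  · -- n even, hence m odd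
    have ha' : a % 2 = 0 := Nat.even_iff.mp ha
    have hb' : b % 2 = 1 := by omega
    have hab : Even (a + b + 1) := Nat.even_iff.mpr (by omega)
    rw [Fpoly_add_two (a + b + 1), if_pos hab, Fpoly_add_two a, if_pos ha]
    have hsplit : Fpoly (a + b + 1 + 1) + Fpoly (a + b + 1)
        - (Fpoly (a + 1) + Fpoly a) * Fpoly (b + 2)
        = (Fpoly (a + b + 1 + 1) - Fpoly (a + 1) * Fpoly (b + 2))
          + (Fpoly (a + b + 1) - Fpoly a * Fpoly (b + 2)) := by ring
    rw [hsplit, coeff_add]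
    apply add_nonneg
    · have h := ih (a + 1 + (b + 2)) (by omega) (a + 1) (b + 2) rfl (by omega) (by omega)
        (by rintro ⟨x, y⟩; rw [Nat.even_iff] at x y; omega) k
      rwa [show a + 1 + (b + 2) - 1 = a + b + 1 + 1 from by omega] at h
    · rcases Nat.eq_zero_or_pos a with ha0 | ha0
      · subst ha0
        rw [show Fpoly 0 = 0 from rfl, zero_mul, sub_zero]
        exact Fpoly_coeff_nonneg _ k
      · have h := ih (a + (b + 2)) (by omega) a (b + 2) rfl ha0 (by omega)
          (by rintro ⟨x, y⟩; rw [Nat.even_iff] at x y; omega) k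
        rwa [show a + (b + 2) - 1 = a + b + 1 from by omega] at h
  · -- both odd
    have ha' : a % 2 = 1 := by
      rcases Nat.even_or_odd a with h | h
      · exact absurd h ha
      · exact Nat.odd_iff.mp h
    have hb' : b % 2 = 1 := by
      rcases Nat.even_or_odd b with h | h
      · exact absurd h hb
      · exact Nat.odd_iff.mp h
    have hab : ¬ Even (a + b + 1) := by rw [Nat.even_iff]; omega
    rw [Fpoly_add_two (a + b + 1), if_neg hab, Fpoly_add_two b, if_neg hb]
    have hsplit : Fpoly (a + b + 1 + 1) + X * Fpoly (a + b + 1)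
        - Fpoly (a + 2) * (Fpoly (b + 1) + X * Fpoly b)
        = (Fpoly (a + b + 1 + 1) - Fpoly (a + 2) * Fpoly (b + 1))
          + X * (Fpoly (a + b + 1) - Fpoly (a + 2) * Fpoly b) := by ring
    rw [hsplit, coeff_add]
    apply add_nonneg
    · have h := ih (a + 2 + (b + 1)) (by omega) (a + 2) (b + 1) rfl (by omega) (by omega)
        (by rintro ⟨x, y⟩; rw [Nat.even_iff] at x y; omega) k
      rwa [show a + 2 + (b + 1) - 1 = a + b + 1 + 1 from by omega] at h
    · apply X_mul_coeff_nonneg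
      intro j
      have h := ih (a + 2 + b) (by omega) (a + 2) b rfl (by omega) (by omega)
        (by rintro ⟨x, y⟩; rw [Nat.even_iff] at x y; omega) j
      rwa [show a + 2 + b - 1 = a + b + 1 from by omega] at h

theorem Fpoly_mul_le (n m : ℕ) (hn : 1 ≤ n) (hm : 1 ≤ m)
    (h : ¬ (Even n ∧ Even m)) :
    ∀ k : ℕ, 0 ≤ (Fpoly (n + m - 1) - Fpoly n * Fpoly m).coeff k := by
  exact key (n + m) n m rfl hn hm h
end

section
/- Define sequences t_n and u_n by t_1 = 1, u_1 = 2, and for n ≥ 2: t_n = t_{n−1} + u_{n−1} and u_n = t_n + 2^{n−1}. Then t_n = 2^{n−2}(n+1) and u_n = 2^{n−2}(n+3) for all n ≥ 2. -/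
theorem thagomizer_spanning_trees (t u : ℕ → ℕ)
    (ht1 : t 1 = 1) (hu1 : u 1 = 2)
    (ht : ∀ n, 2 ≤ n → t n = t (n-1) + u (n-1))
    (hu : ∀ n, 2 ≤ n → u n = t n + 2^(n-1)) :
    ∀ n, 2 ≤ n → t n = 2^(n-2) * (n+1) ∧ u n = 2^(n-2) * (n+3) := by
  intro n hn
  induction n, hn using Nat.le_induction with
  | base =>
    have h2 : t 2 = 3 := by rw [ht 2 (by norm_num)]; simp [ht1, hu1]
    have h3 : u 2 = 5 := by rw [hu 2 (by norm_num), h2]; norm_num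
    simp [h2, h3]
  | succ n hn ih =>
    obtain ⟨m, rfl⟩ : ∃ m, n = m + 2 := ⟨n - 2, by omega⟩
    obtain ⟨iht, ihu⟩ := ih
    have htn : t (m + 2 + 1) = 2 ^ (m + 1) * (m + 2 + 2) := by
      rw [ht (m + 2 + 1) (by omega)]
      simp only [Nat.add_sub_cancel] at *
      rw [iht, ihu]; ring
    refine ⟨by simpa using htn, ?_⟩
    rw [hu (m + 2 + 1) (by omega), htn,
      show m + 2 + 1 - 1 = m + 1 + 1 from rfl, show m + 2 + 1 - 2 = m + 1 from rfl]
    ring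
end

section
/- Define polynomials F_n(y) by F_0=0, F_1=1, F_n=F_{n−1}+F_{n−2} for n even, F_n=F_{n−1}+y·F_{n−2} for n odd; and S_n(y) by S_1=1, S_n=(y+1)S_{n−1}+2^{n−2} for n ≥ 2. Then for all n ≥ 2, the coefficientwise inequality S_n(y) ≤ F_{2n}(y) holds in ℤ[y]. -/
open Polynomial

noncomputable def Spoly : ℕ → Polynomial ℤ
  | 0 => 0
  | 1 => 1
  | (n+2) => (X + 1) * Spoly (n+1) + C (2^n)

def NN (p : Polynomial ℤ) : Prop := ∀ k, 0 ≤ p.coeff k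

lemma NN_add {p q} (hp : NN p) (hq : NN q) : NN (p + q) := fun k => by
  simp only [coeff_add]; exact add_nonneg (hp k) (hq k)

lemma NN_mul {p q} (hp : NN p) (hq : NN q) : NN (p * q) := fun k => by
  rw [coeff_mul]
  exact Finset.sum_nonneg fun x _ => mul_nonneg (hp _) (hq _)

lemma NN_X : NN (X : Polynomial ℤ) := fun k => by
  rw [coeff_X]; split <;> norm_num

lemma NN_C {a : ℤ} (ha : 0 ≤ a) : NN (C a) := fun k => by
  rw [coeff_C]; split <;> simp [ha]

lemma Fpoly_even (m : ℕ) : Fpoly (2*m+2) = Fpoly (2*m+1) + Fpoly (2*m) := by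
  rw [show 2*m+2 = (2*m)+2 from rfl, Fpoly]
  simp [Nat.even_mul]

lemma Fpoly_odd (m : ℕ) : Fpoly (2*m+3) = Fpoly (2*m+2) + X * Fpoly (2*m+1) := by
  rw [show 2*m+3 = (2*m+1)+2 from rfl, Fpoly]
  simp [Nat.even_add_one, Nat.even_mul]

lemma NN_F (n : ℕ) : NN (Fpoly n) := by
  induction n using Nat.strong_induction_on with
  | _ n ih =>
    match n with
    | 0 => intro k; simp [Fpoly]
    | 1 => intro k; simp only [Fpoly, coeff_one]; split <;> norm_num
    | (n+2) =>
      rw [Fpoly]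
      refine NN_add (ih _ (by omega)) ?_
      split
      · exact ih _ (by omega)
      · exact NN_mul NN_X (ih _ (by omega))

lemma G_rec (m : ℕ) :
    Fpoly (2*m+4) = (X+2) * Fpoly (2*m+2) - X * Fpoly (2*m) := by
  have h1 : Fpoly (2*m+4) = Fpoly (2*m+3) + Fpoly (2*m+2) := by
    have := Fpoly_even (m+1); rw [show 2*(m+1)+2 = 2*m+4 from by ring,
      show 2*(m+1)+1 = 2*m+3 from by ring, show 2*(m+1) = 2*m+2 from by ring] at this
    exact this
  rw [h1, Fpoly_odd m, Fpoly_even m]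
  ring

lemma H_nn (m : ℕ) : NN (Fpoly (2*m+2) - X * Fpoly (2*m) - C (2^m)) := by
  induction m with
  | zero => intro k; norm_num [Fpoly]
  | succ m ih =>
    have key : Fpoly (2*(m+1)+2) - X * Fpoly (2*(m+1)) - C (2^(m+1))
        = C 2 * (Fpoly (2*m+2) - X * Fpoly (2*m) - C (2^m)) + X * Fpoly (2*m) := by
      rw [show 2*(m+1)+2 = 2*m+4 from by ring, show 2*(m+1) = 2*m+2 from by ring,
        G_rec m, pow_succ, C_mul, show (C 2 : Polynomial ℤ) = 2 from by norm_num]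
      ring
    rw [key]
    exact NN_add (NN_mul (NN_C (by norm_num)) ih) (NN_mul NN_X (NN_F _))

lemma D_nn (m : ℕ) : NN (Fpoly (2*(m+1)) - Spoly (m+1)) := by
  induction m with
  | zero => intro k; norm_num [Fpoly, Spoly]
  | succ m ih =>
    have key : Fpoly (2*(m+2)) - Spoly (m+2)
        = (X+1) * (Fpoly (2*(m+1)) - Spoly (m+1))
          + (Fpoly (2*m+2) - X * Fpoly (2*m) - C (2^m)) := by
      rw [show 2*(m+2) = 2*m+4 from by ring, G_rec m, Spoly,
        show 2*(m+1) = 2*m+2 from by ring]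
      ring
    rw [key]
    exact NN_add (NN_mul (NN_add NN_X (NN_C zero_le_one)) ih) (H_nn m)

theorem Spoly_le_Fpoly (n : ℕ) (hn : 2 ≤ n) :
    ∀ k : ℕ, 0 ≤ (Fpoly (2*n) - Spoly n).coeff k := by
  obtain ⟨m, rfl⟩ : ∃ m, n = m + 1 := ⟨n - 1, by omega⟩
  exact D_nn m
end

section
/- For all n ≥ 2, the inequality 2^{n−2}·(n+1) ≤ F(2n) holds, where F denotes the Fibonacci numbers. -/
lemma aux_pow_le_fib (k : ℕ) : 2^k ≤ Nat.fib (2*k+1) := by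
  induction k with
  | zero => simp
  | succ n ih =>
    have h1 : 2*(n+1)+1 = (2*n+1) + 2 := by ring
    rw [h1, Nat.fib_add_two]
    have h2 : Nat.fib (2*n+1) ≤ Nat.fib (2*n+1+1) := Nat.fib_le_fib_succ
    calc 2^(n+1) = 2^n + 2^n := by ring
    _ ≤ Nat.fib (2*n+1+1) + Nat.fib (2*n+1) := Nat.add_le_add (le_trans ih h2) ih
    _ = Nat.fib (2*n+1) + Nat.fib (2*n+1+1) := by ring

theorem star_le_path (n : ℕ) (hn : 2 ≤ n) :
    2^(n-2) * (n+1) ≤ Nat.fib (2*n) := by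
  induction n, hn using Nat.le_induction with
  | base => norm_num [show 2*2 = 4 from rfl]
  | succ n hn ih =>
    have h1 : 2*(n+1) = 2*n + 2 := by ring
    rw [h1, Nat.fib_add_two, Nat.fib_add_one (by omega)]
    have h2 : 2^(n-1) ≤ Nat.fib (2*n-1) := by
      have := aux_pow_le_fib (n-1)
      have h3 : 2*(n-1)+1 = 2*n-1 := by omega
      rwa [h3] at this
    have h4 : (n+1)-2 = n-1 := by omega
    rw [h4]
    have h5 : 2^(n-1) = 2 * 2^(n-2) := by
      rw [← pow_succ']
      congr 1
      omega
    calc 2^(n-1) * (n+1+1) = 2*(2^(n-2)*(n+1)) + 2^(n-1) := by rw [h5]; ring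
    _ ≤ 2*Nat.fib (2*n) + Nat.fib (2*n-1) :=
        Nat.add_le_add (Nat.mul_le_mul_left 2 ih) h2
    _ = Nat.fib (2*n) + (Nat.fib (2*n-1) + Nat.fib (2*n)) := by ring
end

section
/- Let s ≥ 1 and let m be a positive integer. Let M' be the s×s integer matrix with M'(1,1)=m, M'(i,i)=2 for 2 ≤ i ≤ s, M'(i,1)=−c for 2 ≤ i ≤ s (where c is a fixed integer), and all other entries 0. If c is even, then the cokernel ℤ^s / M'·ℤ^s is isomorphic to (ℤ/2)^{s−1} ⊕ ℤ/m. -/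
def coconutMatrix (s : ℕ) (m c : ℤ) : Matrix (Fin s) (Fin s) ℤ :=
  fun i j =>
    if i = j then (if (i : ℕ) = 0 then m else 2)
    else if (j : ℕ) = 0 then -c
    else 0

lemma coconut_mulVec (s : ℕ) (hs : 1 ≤ s) (m c : ℤ) (x : Fin s → ℤ) (i : Fin s) :
    (coconutMatrix s m c).mulVec x i =
      if (i : ℕ) = 0 then m * x i else 2 * x i + (-c) * x ⟨0, hs⟩ := by
  unfold Matrix.mulVec dotProduct coconutMatrix
  by_cases hi : (i : ℕ) = 0
  · simp only [hi, if_true]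
    rw [Finset.sum_eq_single i]
    · simp [hi]
    · intro j _ hj
      have hj0 : (j : ℕ) ≠ 0 := by
        intro h
        exact hj (Fin.ext (h.trans hi.symm))
      have hij : ¬ i = j := fun h => hj h.symm
      simp [hj0, hij]
    · simp
  · have key : ∀ j : Fin s, (if i = j then (2 : ℤ)
        else if (j : ℕ) = 0 then -c else 0) * x j =
        (if j = i then 2 * x j else 0) + (if j = (⟨0, hs⟩ : Fin s) then -c * x j else 0) := by
      intro j
      by_cases h1 : i = j
      · have hz : ¬ j = (⟨0, hs⟩ : Fin s) := by
          intro h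
          apply hi
          rw [h1, h]
        simp [h1, hz]
      · have h1' : ¬ j = i := fun h => h1 h.symm
        by_cases h2 : (j : ℕ) = 0
        · have hz : j = (⟨0, hs⟩ : Fin s) := Fin.ext h2
          subst hz
          simp [h1, h1', h2]
        · have hz : ¬ j = (⟨0, hs⟩ : Fin s) := by
            intro h; exact h2 (by rw [h])
          simp [h1, h1', h2, hz]
    simp only [key, Finset.sum_add_distrib, Finset.sum_ite_eq', Finset.mem_univ, if_true,
      if_neg hi]

theorem coconut_cokernel_even (s : ℕ) (hs : 1 ≤ s) (m : ℕ) (hm : 0 < m)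
    (c : ℤ) (hc : Even c) :
    Nonempty (((Fin s → ℤ) ⧸
        LinearMap.range (Matrix.toLin' (coconutMatrix s (m : ℤ) c)))
      ≃+ ((Fin (s-1) → ZMod 2) × ZMod m)) := by
  haveI : NeZero m := ⟨hm.ne'⟩
  obtain ⟨k, hk⟩ := hc
  -- the quotient map
  set f : (Fin s → ℤ) →ₗ[ℤ] ((Fin (s-1) → ZMod 2) × ZMod m) :=
    { toFun := fun v =>
        (fun i : Fin (s-1) => ((v ⟨(i : ℕ) + 1, by have := i.isLt; omega⟩ : ℤ) : ZMod 2),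
          ((v ⟨0, hs⟩ : ℤ) : ZMod m)),
      map_add' := by intro v w; ext i <;> simp
      map_smul' := by intro z v; ext i <;> simp } with hf
  have hfapply : ∀ v, f v =
      (fun i : Fin (s-1) => ((v ⟨(i : ℕ) + 1, by have := i.isLt; omega⟩ : ℤ) : ZMod 2),
        ((v ⟨0, hs⟩ : ℤ) : ZMod m)) := fun v => rfl
  have hsurj : Function.Surjective f := by
    rintro ⟨w, g⟩
    obtain ⟨a, ha⟩ := ZMod.intCast_surjective g
    have hb : ∀ i : Fin (s-1), ∃ b : ℤ, (b : ZMod 2) = w i :=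
      fun i => ZMod.intCast_surjective (w i)
    choose b hb using hb
    refine ⟨fun j => if h : (j : ℕ) = 0 then a else b ⟨(j : ℕ) - 1, by have := j.isLt; omega⟩, ?_⟩
    rw [hfapply]
    refine Prod.ext ?_ ?_
    · funext i
      have h1 : ¬ ((⟨(i : ℕ) + 1, by have := i.isLt; omega⟩ : Fin s) : ℕ) = 0 := by simp
      show ((if h : ((⟨(i : ℕ) + 1, by have := i.isLt; omega⟩ : Fin s) : ℕ) = 0 then a
        else b ⟨((⟨(i : ℕ) + 1, by have := i.isLt; omega⟩ : Fin s) : ℕ) - 1, by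
          have := (⟨(i : ℕ) + 1, by have := i.isLt; omega⟩ : Fin s).isLt; omega⟩ : ℤ) : ZMod 2)
        = w i
      rw [dif_neg h1]
      exact hb i
    · show ((if h : ((⟨0, hs⟩ : Fin s) : ℕ) = 0 then a
        else b ⟨((⟨0, hs⟩ : Fin s) : ℕ) - 1, by
          have := (⟨0, hs⟩ : Fin s).isLt; omega⟩ : ℤ) : ZMod m) = g
      rw [dif_pos rfl]
      exact ha
  have hker : LinearMap.ker f = LinearMap.range (Matrix.toLin' (coconutMatrix s (m : ℤ) c)) := by
    ext v
    simp only [LinearMap.mem_ker, LinearMap.mem_range]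
    constructor
    · intro hv
      rw [hfapply] at hv
      have hv1 : ∀ i : Fin (s-1), ((v ⟨(i : ℕ) + 1, by have := i.isLt; omega⟩ : ℤ) : ZMod 2) = 0 :=
        fun i => congrFun (congrArg Prod.fst hv) i
      have hv2 : ((v ⟨0, hs⟩ : ℤ) : ZMod m) = 0 := congrArg Prod.snd hv
      have hd2 : ∀ j : Fin s, (j : ℕ) ≠ 0 → (2 : ℤ) ∣ v j := by
        intro j hj
        have := hv1 ⟨(j : ℕ) - 1, by have := j.isLt; omega⟩
        rw [show (⟨(j : ℕ) - 1 + 1, by have := j.isLt; omega⟩ : Fin s) = j from Fin.ext (by simp; omega)] at this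
        exact_mod_cast (ZMod.intCast_zmod_eq_zero_iff_dvd _ 2).mp this
      have hdm : ((m : ℕ) : ℤ) ∣ v ⟨0, hs⟩ :=
        (ZMod.intCast_zmod_eq_zero_iff_dvd _ m).mp hv2
      obtain ⟨a, ha⟩ := hdm
      choose b hbspec using fun j hj => hd2 j hj
      refine ⟨fun j => if h : (j : ℕ) = 0 then a else b j h + k * a, ?_⟩
      ext i
      rw [Matrix.toLin'_apply, coconut_mulVec s hs]
      by_cases hi : (i : ℕ) = 0
      · have : i = ⟨0, hs⟩ := Fin.ext hi
        simp [hi, this, ha]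
      · rw [if_neg hi, dif_neg hi, dif_pos rfl, hbspec i hi, hk]; ring
    · rintro ⟨x, rfl⟩
      rw [hfapply]
      refine Prod.ext ?_ ?_
      · funext i
        have h1 : ¬ ((⟨(i : ℕ) + 1, by have := i.isLt; omega⟩ : Fin s) : ℕ) = 0 := by simp
        show ((Matrix.toLin' _ x) _ : ZMod 2) = 0
        rw [Matrix.toLin'_apply, coconut_mulVec s hs, if_neg h1,
          ZMod.intCast_zmod_eq_zero_iff_dvd]
        exact ⟨x ⟨(i : ℕ) + 1, by have := i.isLt; omega⟩ + (-k) * x ⟨0, hs⟩, by rw [hk]; ring⟩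
      · show ((Matrix.toLin' _ x) _ : ZMod m) = 0
        rw [Matrix.toLin'_apply, coconut_mulVec s hs, if_pos rfl,
          ZMod.intCast_zmod_eq_zero_iff_dvd]
        exact ⟨x ⟨0, hs⟩, rfl⟩
  rw [← hker]
  exact ⟨(f.quotKerEquivOfSurjective hsurj).toAddEquiv⟩
end

section
/- Let s ≥ 2 and let m be a positive integer. Let M' be the s×s integer matrix with M'(1,1)=m, M'(i,i)=2 for 2 ≤ i ≤ s, M'(i,1)=−c for 2 ≤ i ≤ s, and all other entries 0, where c is an odd integer. Then the cokernel ℤ^s / M'·ℤ^s is isomorphic to (ℤ/2)^{s−2} ⊕ ℤ/(2m). -/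
open Matrix

section CoconutMatrix

variable {n : ℕ} {m c : ℤ}

lemma coconutMatrix_mulVec_zero (y : Fin (n + 1) → ℤ) :
    (coconutMatrix (n + 1) m c *ᵥ y) 0 = m * y 0 := by
  rw [mulVec, dotProduct, Fintype.sum_eq_single 0]
  · simp [coconutMatrix]
  · intro j hj
    simp [coconutMatrix, Ne.symm hj, hj]

lemma coconutMatrix_mulVec_succ (y : Fin (n + 1) → ℤ) (i : Fin n) :
    (coconutMatrix (n + 1) m c *ᵥ y) i.succ = 2 * y i.succ - c * y 0 := by
  rw [mulVec, dotProduct, Fintype.sum_eq_add i.succ 0 (Fin.succ_ne_zero i)]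
  · simp [coconutMatrix]
    ring
  · rintro j ⟨hji, hj0⟩
    simp [coconutMatrix, Ne.symm hji, hj0]

lemma mem_range_toLin'_coconutMatrix_iff (x : Fin (n + 1) → ℤ) :
    x ∈ LinearMap.range (toLin' (coconutMatrix (n + 1) m c)) ↔
      ∃ y₀, m * y₀ = x 0 ∧ ∀ i : Fin n, 2 ∣ x i.succ + c * y₀ := by
  simp only [LinearMap.mem_range, toLin'_apply]
  constructor
  · rintro ⟨y, rfl⟩
    refine ⟨y 0, (coconutMatrix_mulVec_zero y).symm, fun i => ⟨y i.succ, ?_⟩⟩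
    rw [coconutMatrix_mulVec_succ]
    ring
  · rintro ⟨y₀, hy₀, hx⟩
    choose w hw using hx
    refine ⟨Fin.cons y₀ w, funext fun i => Fin.cases ?_ (fun i => ?_) i⟩
    · simpa [coconutMatrix_mulVec_zero] using hy₀
    · simp only [coconutMatrix_mulVec_succ, Fin.cons_succ, Fin.cons_zero]
      linarith [hw i]

end CoconutMatrix

lemma exists_mul_eq_forall_two_dvd_add_mul_iff {ι : Type*} {c : ℤ} (hc : Odd c) (m a : ℤ)
    (x : ι → ℤ) (l : ι) :
    (∃ y₀, m * y₀ = a ∧ ∀ i, 2 ∣ x i + c * y₀) ↔ 2 * m ∣ a + m * x l ∧ ∀ i, 2 ∣ x i + x l := by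
  obtain ⟨t, rfl⟩ := hc
  constructor
  · rintro ⟨y₀, rfl, hx⟩
    obtain ⟨k, hk⟩ := hx l
    refine ⟨⟨k - t * y₀, by linear_combination m * hk⟩, fun i => ?_⟩
    obtain ⟨j, hj⟩ := hx i
    exact ⟨j + k - (2 * t + 1) * y₀, by linear_combination hj + hk⟩
  · rintro ⟨⟨k, hk⟩, hx⟩
    refine ⟨2 * k - x l, by linear_combination -hk, fun i => ?_⟩
    obtain ⟨j, hj⟩ := hx i
    exact ⟨j + (2 * t + 1) * k - (t + 1) * x l, by linear_combination hj⟩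

def coconutInvariant (n m : ℕ) : (Fin (n + 2) → ℤ) →ₗ[ℤ] (Fin n → ZMod 2) × ZMod (2 * m) :=
  AddMonoidHom.toIntLinearMap <| AddMonoidHom.mk'
    (fun x => (fun j => ((x j.castSucc.succ + x (Fin.last _) : ℤ) : ZMod 2),
      ((x 0 + m * x (Fin.last _) : ℤ) : ZMod (2 * m))))
    fun x y => by
      ext <;>
        simp only [Pi.add_apply, Int.cast_add, Prod.fst_add, Prod.snd_add, Int.cast_mul] <;> ring

lemma coconutInvariant_surjective (n m : ℕ) : Function.Surjective (coconutInvariant n m) := by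
  rintro ⟨f, z⟩
  refine ⟨Fin.cons (z.cast : ℤ) (Fin.snoc (fun j => ((f j).cast : ℤ)) 0), ?_⟩
  ext j
  · simp [coconutInvariant, ← Fin.succ_last]
  · simp [coconutInvariant, ← Fin.succ_last]

lemma ker_coconutInvariant {n m : ℕ} {c : ℤ} (hc : Odd c) :
    LinearMap.ker (coconutInvariant n m) =
      LinearMap.range (toLin' (coconutMatrix (n + 2) m c)) := by
  ext x
  rw [mem_range_toLin'_coconutMatrix_iff,
    exists_mul_eq_forall_two_dvd_add_mul_iff hc _ _ _ (Fin.last n), Fin.forall_fin_succ',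
    LinearMap.mem_ker, Prod.ext_iff, funext_iff]
  simp only [coconutInvariant, AddMonoidHom.coe_toIntLinearMap, AddMonoidHom.mk'_apply,
    Pi.zero_apply, Prod.fst_zero, Prod.snd_zero, ZMod.intCast_zmod_eq_zero_iff_dvd,
    Fin.succ_last, Nat.cast_ofNat, Nat.cast_mul]
  have hlast : (2 : ℤ) ∣ x (Fin.last _) + x (Fin.last _) := ⟨x (Fin.last _), by ring⟩
  simp only [hlast, and_true]
  exact and_comm

theorem coconut_cokernel_odd_general (s : ℕ) (hs : 2 ≤ s) (m : ℕ)
    (c : ℤ) (hc : Odd c) :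
    Nonempty (((Fin s → ℤ) ⧸
        LinearMap.range (Matrix.toLin' (coconutMatrix s (m : ℤ) c)))
      ≃+ ((Fin (s-2) → ZMod 2) × ZMod (2*m))) := by
  obtain ⟨n, rfl⟩ : ∃ n, s = n + 2 := ⟨s - 2, by omega⟩
  exact ⟨((Submodule.quotEquivOfEq _ _ (ker_coconutInvariant hc).symm).trans
    ((coconutInvariant n m).quotKerEquivOfSurjective (coconutInvariant_surjective n m))).toAddEquiv⟩

theorem coconut_cokernel_odd (s : ℕ) (hs : 2 ≤ s) (m : ℕ) (hm : 0 < m)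
    (c : ℤ) (hc : Odd c) :
    Nonempty (((Fin s → ℤ) ⧸
        LinearMap.range (Matrix.toLin' (coconutMatrix s (m : ℤ) c)))
      ≃+ ((Fin (s-2) → ZMod 2) × ZMod (2*m))) :=
  coconut_cokernel_odd_general s hs m c hc
end

section
/- Fix real β in the interval [2, φ²] where φ = (1+√5)/2, and set α = log(β/2)/log(φ²/2), so α ∈ [0,1] and β = 2·(φ²/2)^α. Define p_n = ⌊αn⌋ and s_n = n − p_n. Then the limit as n → ∞ of (2^{s_n−1}·(s_n·F(2p_n−1) + 2·F(2p_n)))^{1/n} equals β. -/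
open Filter Real

/-!
The count is squeezed between `2 ^ s φ ^ (2p) / (2φ²)` and `(s + 2) 2 ^ s φ ^ (2p)`, so its
logarithm is `s log 2 + 2p log φ + O(log n)`. As `s_n = n - p_n` and `|p_n - αn| ≤ 1`, this is
`n log 2 + αn log (φ² / 2) + O(log n) = n log β + O(log n)`, and the `n`-th root tends to `β`.
-/

open Asymptotics Topology in
theorem tendsto_rpow_one_div_of_abs_log_sub_le {f g : ℕ → ℝ} {L : ℝ} (hL : 0 < L)
    (hf : ∀ᶠ n in atTop, 0 < f n) (hfg : ∀ᶠ n in atTop, |log (f n) - n * log L| ≤ g n)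
    (hg : g =o[atTop] fun n => (n : ℝ)) :
    Tendsto (fun n => f n ^ (1 / (n : ℝ))) atTop (𝓝 L) := by
  have herr : (fun n => log (f n) - n * log L) =o[atTop] fun n => (n : ℝ) :=
    (IsBigO.of_bound' (hfg.mono fun n hn => hn.trans (le_abs_self _))).trans_isLittleO hg
  have hlog : Tendsto (fun n => log (f n) / n) atTop (𝓝 (log L)) := by
    have := herr.tendsto_div_nhds_zero.add_const (log L)
    rw [zero_add] at this
    refine this.congr' ?_
    filter_upwards [eventually_ne_atTop 0] with n hn
    field_simp
    ring
  have hexp := (continuous_exp.tendsto _).comp hlog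
  rw [exp_log hL] at hexp
  refine hexp.congr' ?_
  filter_upwards [hf] with n hn
  rw [Function.comp_apply, rpow_def_of_pos hn, mul_one_div]

open Asymptotics in
theorem isLittleO_log_natCast_add_add_const (a C : ℝ) :
    (fun n : ℕ => log (n + a) + C) =o[atTop] fun n => (n : ℝ) := by
  have hlog : (fun n : ℕ => log (n + a)) =o[atTop] fun n => (n : ℝ) + a :=
    isLittleO_log_id_atTop.comp_tendsto
      (tendsto_atTop_add_const_right _ a tendsto_natCast_atTop_atTop)
  have hconst (c : ℝ) : (fun _ : ℕ => c) =o[atTop] fun n => (n : ℝ) :=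
    (isLittleO_const_id_atTop c).comp_tendsto tendsto_natCast_atTop_atTop
  refine (hlog.trans_isBigO ?_).add (hconst C)
  exact (isBigO_refl _ _).add (hconst a).isBigO

theorem abs_min_max_floor_sub_le {x : ℝ} {n : ℕ} (hx₀ : 0 ≤ x) (hxn : x ≤ n) (hn : 1 ≤ n) :
    |((min (max 1 ⌊x⌋₊) (n - 1) : ℕ) : ℝ) - x| ≤ 1 := by
  have hfloor := Nat.floor_le hx₀
  have hfloor' := Nat.lt_floor_add_one x
  push_cast [Nat.cast_sub hn]
  rw [abs_le]
  constructor
  · simp only [le_sub_iff_add_le, le_min_iff, le_max_iff]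
    constructor <;> [right; skip] <;> linarith
  · simp only [sub_le_iff_le_add, min_le_iff, max_le_iff]
    left
    constructor <;> linarith

theorem goldenRatio_pow_le_fib_add_two (m : ℕ) : goldenRatio ^ m ≤ Nat.fib (m + 2) := by
  have hrec := goldenRatio_mul_fib_succ_add_fib (m + 1)
  have hmono : (Nat.fib (m + 1) : ℝ) ≤ Nat.fib (m + 2) := by exact_mod_cast Nat.fib_le_fib_succ
  have : goldenRatio ^ m * goldenRatio ^ 2 ≤ Nat.fib (m + 2) * goldenRatio ^ 2 := by
    rw [← pow_add, goldenRatio_sq]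
    nlinarith [goldenRatio_pos]
  exact le_of_mul_le_mul_right this (by positivity)

theorem fib_le_goldenRatio_pow (m : ℕ) : (Nat.fib m : ℝ) ≤ goldenRatio ^ m := by
  cases m with
  | zero => simp
  | succ k =>
    have hrec := goldenRatio_mul_fib_succ_add_fib k
    have : (Nat.fib (k + 1) : ℝ) ≤ goldenRatio * Nat.fib (k + 1) :=
      le_mul_of_one_le_left (by positivity) one_lt_goldenRatio.le
    have : (0 : ℝ) ≤ Nat.fib k := by positivity
    linarith

theorem abs_log_sub_log_le_of_le_mul {x y a b : ℝ} (hy : 0 < y) (ha : 1 ≤ a) (hb : 1 ≤ b)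
    (hya : y ≤ a * x) (hxb : x ≤ b * y) : |log x - log y| ≤ log a + log b := by
  have hx : 0 < x := pos_of_mul_pos_right (hy.trans_le hya) (by linarith)
  have hlog_y : log y ≤ log a + log x := by
    rw [← log_mul (by positivity) hx.ne']; exact log_le_log hy hya
  have hlog_x : log x ≤ log b + log y := by
    rw [← log_mul (by positivity) hy.ne']; exact log_le_log hx hxb
  have := log_nonneg ha
  have := log_nonneg hb
  rw [abs_le]
  constructor <;> linarith

def coneTreeCount (p s : ℕ) : ℕ := 2 ^ (s - 1) * (s * Nat.fib (2 * p - 1) + 2 * Nat.fib (2 * p))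

variable {p s : ℕ}

theorem coneTreeCount_pos (hp : 1 ≤ p) : 0 < coneTreeCount p s :=
  Nat.mul_pos (by positivity) (Nat.add_pos_right _ (by simpa using Nat.fib_pos.mpr (by omega)))

theorem two_pow_mul_goldenRatio_pow_le_coneTreeCount (hp : 1 ≤ p) (hs : 1 ≤ s) :
    (2 : ℝ) ^ s * goldenRatio ^ (2 * p) ≤ 2 * goldenRatio ^ 2 * coneTreeCount p s := by
  have hfib : goldenRatio ^ (2 * p - 2) ≤ Nat.fib (2 * p) := by
    simpa [Nat.sub_add_cancel (by omega : 2 ≤ 2 * p)]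
      using goldenRatio_pow_le_fib_add_two (2 * p - 2)
  have hfib_le : (Nat.fib (2 * p) : ℝ) ≤ s * Nat.fib (2 * p - 1) + 2 * Nat.fib (2 * p) := by
    have : (0 : ℝ) ≤ s * Nat.fib (2 * p - 1) := by positivity
    have : (0 : ℝ) ≤ Nat.fib (2 * p) := by positivity
    linarith
  have h2 : (2 : ℝ) ^ s = 2 * 2 ^ (s - 1) := by rw [← pow_succ', Nat.sub_add_cancel hs]
  have hφ : goldenRatio ^ (2 * p) = goldenRatio ^ 2 * goldenRatio ^ (2 * p - 2) := by
    rw [← pow_add, Nat.add_sub_cancel' (by omega)]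
  rw [coneTreeCount, h2, hφ]
  push_cast
  have := hfib.trans hfib_le
  calc 2 * 2 ^ (s - 1) * (goldenRatio ^ 2 * goldenRatio ^ (2 * p - 2))
      = 2 * goldenRatio ^ 2 * 2 ^ (s - 1) * goldenRatio ^ (2 * p - 2) := by ring
    _ ≤ 2 * goldenRatio ^ 2 * 2 ^ (s - 1) * (s * Nat.fib (2 * p - 1) + 2 * Nat.fib (2 * p)) := by
      gcongr
    _ = _ := by ring

theorem coneTreeCount_le :
    (coneTreeCount p s : ℝ) ≤ (s + 2) * (2 ^ s * goldenRatio ^ (2 * p)) := by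
  have hmono : (Nat.fib (2 * p - 1) : ℝ) ≤ Nat.fib (2 * p) := by
    exact_mod_cast Nat.fib_mono (Nat.sub_le _ _)
  have hφ := fib_le_goldenRatio_pow (2 * p)
  have h2 : (2 : ℝ) ^ (s - 1) ≤ 2 ^ s := pow_le_pow_right₀ one_le_two (Nat.sub_le _ _)
  rw [coneTreeCount]
  push_cast
  calc (2 : ℝ) ^ (s - 1) * (s * Nat.fib (2 * p - 1) + 2 * Nat.fib (2 * p))
      ≤ 2 ^ s * ((s + 2) * Nat.fib (2 * p)) := by
        gcongr
        nlinarith [(Nat.cast_nonneg s : (0 : ℝ) ≤ s)]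
    _ ≤ 2 ^ s * ((s + 2) * goldenRatio ^ (2 * p)) := by gcongr
    _ = _ := by ring

theorem abs_log_coneTreeCount_sub_le (hp : 1 ≤ p) (hs : 1 ≤ s) :
    |log (coneTreeCount p s) - (s * log 2 + 2 * p * log goldenRatio)|
      ≤ log (2 * goldenRatio ^ 2) + log (s + 2) := by
  have hcenter :
      log ((2 : ℝ) ^ s * goldenRatio ^ (2 * p)) = s * log 2 + 2 * p * log goldenRatio := by
    rw [log_mul (by positivity) (by positivity), log_pow, log_pow]
    push_cast
    ring
  rw [← hcenter]
  refine abs_log_sub_log_le_of_le_mul (by positivity) ?_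
    (by linarith [(Nat.cast_nonneg s : (0 : ℝ) ≤ s)])
    (two_pow_mul_goldenRatio_pow_le_coneTreeCount hp hs) coneTreeCount_le
  nlinarith [one_lt_goldenRatio]

theorem abs_log_coneTreeCount_sub_mul_log_le {α β : ℝ} {n : ℕ}
    (hβ : log β = log 2 + α * log (goldenRatio ^ 2 / 2)) (hp : 1 ≤ p) (hpn : p ≤ n - 1)
    (hpα : |(p : ℝ) - α * n| ≤ 1) :
    |log (coneTreeCount p (n - p)) - n * log β|
      ≤ log (n + 2) + (log (2 * goldenRatio ^ 2) + log (goldenRatio ^ 2 / 2)) := by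
  set c := log (goldenRatio ^ 2 / 2) with hc_def
  have hc : 0 < c := log_pos (by rw [goldenRatio_sq]; linarith [one_lt_goldenRatio])
  have hT := abs_log_coneTreeCount_sub_le (s := n - p) hp (by omega)
  have hcenter :
      (n - p : ℕ) * log 2 + 2 * p * log goldenRatio - n * log β = (p - α * n) * c := by
    have hc_eq : c = 2 * log goldenRatio - log 2 := by
      rw [hc_def, log_div (by positivity) two_ne_zero, log_pow]
      push_cast
      ring
    rw [hβ, hc_eq, Nat.cast_sub (by omega)]
    ring
  have hlog_s : log ((n - p : ℕ) + 2) ≤ log (n + 2) := by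
    gcongr
    exact_mod_cast Nat.sub_le _ _
  calc |log (coneTreeCount p (n - p)) - n * log β|
      ≤ |log (coneTreeCount p (n - p)) - ((n - p : ℕ) * log 2 + 2 * p * log goldenRatio)|
        + |(n - p : ℕ) * log 2 + 2 * p * log goldenRatio - n * log β| := abs_sub_le _ _ _
    _ ≤ log (2 * goldenRatio ^ 2) + log (n + 2) + 1 * c := by
      rw [hcenter, abs_mul, abs_of_pos hc]
      gcongr
      linarith
    _ = log (n + 2) + (log (2 * goldenRatio ^ 2) + c) := by ring

theorem coconut_root_limit (β : ℝ)
    (hβ : β ∈ Set.Icc 2 (((1 + Real.sqrt 5) / 2) ^ 2)) :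
    let φ : ℝ := (1 + Real.sqrt 5) / 2
    let α : ℝ := Real.log (β / 2) / Real.log (φ^2 / 2)
    let p : ℕ → ℕ := fun n => min (max 1 ⌊α * n⌋₊) (n - 1)
    let s : ℕ → ℕ := fun n => n - p n
    Filter.Tendsto
      (fun n : ℕ =>
        ((2^(s n - 1) * (s n * Nat.fib (2 * p n - 1) + 2 * Nat.fib (2 * p n)) : ℕ) : ℝ)
          ^ ((1 : ℝ) / n))
      Filter.atTop (nhds β) := by
  intro φ α p s
  obtain ⟨hβ₂, hβφ⟩ : 2 ≤ β ∧ β ≤ φ ^ 2 := hβ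
  have hφ₂ : 2 < φ ^ 2 := by
    rw [show φ = goldenRatio from rfl, goldenRatio_sq]
    linarith [one_lt_goldenRatio]
  have hc : 0 < log (φ ^ 2 / 2) := log_pos (by linarith)
  have hα₀ : 0 ≤ α := div_nonneg (log_nonneg (by linarith)) hc.le
  have hα₁ : α ≤ 1 := (div_le_one hc).mpr (log_le_log (by linarith) (by linarith))
  have hlogβ : log β = log 2 + α * log (φ ^ 2 / 2) := by
    rw [div_mul_cancel₀ _ hc.ne', log_div (by linarith) two_ne_zero]
    ring
  have hp₁ (n : ℕ) (hn : 2 ≤ n) : 1 ≤ p n := le_min (le_max_left _ _) (by omega)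
  refine tendsto_rpow_one_div_of_abs_log_sub_le (f := fun n => (coneTreeCount (p n) (s n) : ℝ))
    (by linarith) ?_ ?_
    (isLittleO_log_natCast_add_add_const 2 (log (2 * φ ^ 2) + log (φ ^ 2 / 2)))
  · filter_upwards [eventually_ge_atTop 2] with n hn
    exact_mod_cast coneTreeCount_pos (hp₁ n hn)
  · filter_upwards [eventually_ge_atTop 2] with n hn
    exact abs_log_coneTreeCount_sub_mul_log_le hlogβ (hp₁ n hn) (min_le_right _ _)
      (abs_min_max_floor_sub_le (by positivity) (by nlinarith) (by omega))
end
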